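/- arXiv:1806.06383 — 2 statements merged into one kernel-verified Lean document; each statement's English description precedes it below -/
import Mathlib

section
/- Let F : ℝ → ℝ be continuous with b ≤ F(y) ≤ M for all y (where 0 < b ≤ M), let x solve x'(t) = F(x(t)), x(0) = x₀, on [0,T], and let Y be absolutely continuous with Y(0) = x₀ and F(Y(t)) − r ≤ Y'(t) ≤ F(Y(t)) + r for a.e. t ∈ [0,T], for some r ≥ 0. Then sup_{0≤t≤T} |Y(t) − x(t)| ≤ M T r / b. -/
open MeasureTheory Set Interval

/-!
With `G` a primitive of `1 / F`, the exact solution runs at unit speed in the new variable: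
`G (x t) = G x₀ + t`. Along the perturbed trajectory `G ∘ Y` is absolutely continuous with
`(G ∘ Y)' = Y' / F (Y) ∈ [1 - r / b, 1 + r / b]` almost everywhere, so integrating gives
`|G (Y t) - G (x t)| ≤ T r / b`. Finally `G' ≥ 1 / M` turns this into
`|Y t - x t| ≤ M T r / b`.
-/

theorem LipschitzWith.comp_absolutelyContinuousOnInterval {X Z : Type*} [PseudoMetricSpace X]
    [PseudoMetricSpace Z] {φ : X → Z} {K : NNReal} {f : ℝ → X} {a b : ℝ}
    (hφ : LipschitzWith K φ) (hf : AbsolutelyContinuousOnInterval f a b) :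
    AbsolutelyContinuousOnInterval (φ ∘ f) a b := by
  unfold AbsolutelyContinuousOnInterval at hf ⊢
  refine squeeze_zero (fun _ => Finset.sum_nonneg fun _ _ => dist_nonneg) (fun E => ?_)
    (by simpa using hf.const_mul (K : ℝ))
  rw [Finset.mul_sum]
  exact Finset.sum_le_sum fun _ _ => hφ.dist_le_mul _ _

theorem AbsolutelyContinuousOnInterval.abs_sub_le_of_ae_abs_deriv_le
    {f : ℝ → ℝ} {a b C : ℝ} (hf : AbsolutelyContinuousOnInterval f a b)
    (hC : ∀ᵐ x, x ∈ Ι a b → |deriv f x| ≤ C) :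
    |f b - f a| ≤ C * |b - a| := by
  rw [← hf.integral_deriv_eq_sub]
  exact intervalIntegral.norm_integral_le_of_norm_le_const_ae (f := deriv f) hC

theorem mul_abs_sub_le_abs_image_sub_of_le_deriv {f f' : ℝ → ℝ} {m : ℝ} (hm : 0 ≤ m)
    (hf : ∀ z, HasDerivAt f (f' z) z) (hf' : ∀ z, m ≤ f' z) (x y : ℝ) :
    m * |y - x| ≤ |f y - f x| := by
  wlog hxy : x ≤ y generalizing x y
  · rw [abs_sub_comm y, abs_sub_comm (f y)]
    exact this y x (le_of_not_ge hxy)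
  have hmono := mul_sub_le_image_sub_of_le_deriv (fun z => (hf z).differentiableAt)
    (fun z => (hf z).deriv ▸ hf' z) hxy
  have hxy' : 0 ≤ y - x := sub_nonneg.2 hxy
  rwa [abs_of_nonneg hxy', abs_of_nonneg ((mul_nonneg hm hxy').trans hmono)]

theorem comp_sub_eq_of_hasDerivAt_inv {F G x : ℝ → ℝ} {a b : ℝ}
    (hG : ∀ z, HasDerivAt G (F z)⁻¹ z) (hF : ∀ z, F z ≠ 0)
    (hx : ∀ t ∈ Icc a b, HasDerivAt x (F (x t)) t) :
    ∀ t ∈ Icc a b, G (x t) - t = G (x a) - a := by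
  have hderiv : ∀ t ∈ Icc a b, HasDerivAt (fun s => G (x s) - s) 0 t := fun t ht => by
    have h : HasDerivAt (fun s => G (x s) - s) ((F (x t))⁻¹ * F (x t) - 1) t :=
      ((hG (x t)).comp t (hx t ht)).sub (hasDerivAt_id t)
    rwa [inv_mul_cancel₀ (hF _), sub_self] at h
  exact constant_of_has_deriv_right_zero
    (fun t ht => (hderiv t ht).continuousAt.continuousWithinAt)
    (fun t ht => (hderiv t (Ico_subset_Icc_self ht)).hasDerivWithinAt)

theorem abs_comp_integral_sub_le {G φ g : ℝ → ℝ} {K : NNReal} {a b c C : ℝ}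
    (hG : ∀ z, HasDerivAt G (φ z) z) (hGK : LipschitzWith K G)
    (hg : IntervalIntegrable g volume a b)
    (hC : ∀ᵐ s, s ∈ Ι a b → |φ (c + ∫ u in a..s, g u) * g s - 1| ≤ C) :
    |G (c + ∫ u in a..b, g u) - G c - (b - a)| ≤ C * |b - a| := by
  set H : ℝ → ℝ := fun s => G (c + ∫ u in a..s, g u) - s
  have hH : AbsolutelyContinuousOnInterval H a b :=
    ((hGK.comp ((isometry_add_left c).lipschitz)).comp_absolutelyContinuousOnInterval
      (hg.absolutelyContinuousOnInterval_intervalIntegral left_mem_uIcc)).sub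
      (LipschitzWith.id.lipschitzOnWith.absolutelyContinuousOnInterval)
  have hH' : ∀ᵐ s, s ∈ Ι a b → |deriv H s| ≤ C := by
    filter_upwards [hg.ae_hasDerivAt_integral, hC] with s hs hCs hsab
    have hsab' := uIoc_subset_uIcc hsab
    have hHs : HasDerivAt H (φ (c + ∫ u in a..s, g u) * g s - 1) s :=
      ((hG _).comp s ((hs hsab' a left_mem_uIcc).const_add c)).sub (hasDerivAt_id s)
    rw [hHs.deriv]
    exact hCs hsab
  have hHab : H b - H a = G (c + ∫ u in a..b, g u) - G c - (b - a) := by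
    simp only [H, intervalIntegral.integral_same, add_zero]
    ring
  rw [← hHab]
  exact hH.abs_sub_le_of_ae_abs_deriv_le hH'

theorem abs_inv_mul_sub_one_le {u v r b : ℝ} (hb : 0 < b) (hbv : b ≤ v) (huv : |u - v| ≤ r) :
    |v⁻¹ * u - 1| ≤ r / b := by
  have hv : 0 < v := hb.trans_le hbv
  calc |v⁻¹ * u - 1| = |u - v| / v := by
        rw [show v⁻¹ * u - 1 = (u - v) / v by field_simp, abs_div, abs_of_pos hv]
    _ ≤ r / v := by gcongr
    _ ≤ r / b := div_le_div_of_nonneg_left ((abs_nonneg _).trans huv) hb hbv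

theorem perturbed_ode_comparison_general
    (F : ℝ → ℝ) (b M T r x₀ : ℝ) (hb : 0 < b)
    (hr : 0 ≤ r) (hF : Continuous F) (hFb : ∀ y, b ≤ F y) (hFM : ∀ y, F y ≤ M)
    (x Y : ℝ → ℝ) (g : ℝ → ℝ)
    (hx0 : x 0 = x₀)
    (hx : ∀ t ∈ Set.Icc (0 : ℝ) T, HasDerivAt x (F (x t)) t)
    (hg : IntervalIntegrable g volume 0 T)
    (hY : ∀ t ∈ Set.Icc (0 : ℝ) T, Y t = x₀ + ∫ s in (0 : ℝ)..t, g s)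
    (hgbd : ∀ᵐ s ∂volume, s ∈ Set.Icc (0 : ℝ) T →
      F (Y s) - r ≤ g s ∧ g s ≤ F (Y s) + r) :
    ∀ t ∈ Set.Icc (0 : ℝ) T, |Y t - x t| ≤ M * T * r / b := by
  intro t ht
  have hFpos : ∀ y, 0 < F y := fun y => hb.trans_le (hFb y)
  set G : ℝ → ℝ := fun z => ∫ y in x₀..z, (F y)⁻¹
  have hG : ∀ z, HasDerivAt G (F z)⁻¹ z := fun z =>
    ((hF.inv₀ fun y => (hFpos y).ne').integral_hasStrictDerivAt x₀ z).hasDerivAt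
  have hGK : LipschitzWith b⁻¹.toNNReal G :=
    lipschitzWith_of_nnnorm_deriv_le (fun z => (hG z).differentiableAt) fun z => by
      rw [← NNReal.coe_le_coe, coe_nnnorm, Real.coe_toNNReal _ (inv_nonneg.2 hb.le), (hG z).deriv,
        Real.norm_eq_abs, abs_of_pos (inv_pos.2 (hFpos z))]
      exact inv_anti₀ hb (hFb z)
  have hGx : G (x t) = G x₀ + (t - 0) := by
    linarith [hx0 ▸ comp_sub_eq_of_hasDerivAt_inv hG (fun y => (hFpos y).ne') hx t ht]
  have hGY : |G (Y t) - G (x t)| ≤ r / b * T := by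
    rw [hGx, hY t ht, ← sub_sub]
    have hgt := hg.mono_set (uIcc_subset_uIcc left_mem_uIcc (Icc_subset_uIcc ht))
    refine (abs_comp_integral_sub_le (C := r / b) hG hGK hgt ?_).trans ?_
    · filter_upwards [hgbd] with s hs hst
      rw [uIoc_of_le ht.1] at hst
      have hsT : s ∈ Icc 0 T := ⟨hst.1.le, hst.2.trans ht.2⟩
      obtain ⟨hlow, hup⟩ := hs hsT
      rw [← hY s hsT]
      exact abs_inv_mul_sub_one_le hb (hFb _) (abs_sub_le_iff.2 ⟨by linarith, by linarith⟩)
    · rw [sub_zero, abs_of_nonneg ht.1]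
      gcongr
      exact ht.2
  have hM : 0 < M := hb.trans_le ((hFb 0).trans (hFM 0))
  calc |Y t - x t| = M * (M⁻¹ * |Y t - x t|) := by field_simp
    _ ≤ M * |G (Y t) - G (x t)| := by
        gcongr
        exact mul_abs_sub_le_abs_image_sub_of_le_deriv (inv_nonneg.2 hM.le) hG
          (fun z => inv_anti₀ (hFpos z) (hFM z)) _ _
    _ ≤ M * (r / b * T) := by gcongr
    _ = M * T * r / b := by ring

theorem perturbed_ode_comparison
    (F : ℝ → ℝ) (b M T r x₀ : ℝ) (hb : 0 < b) (hbM : b ≤ M) (hT : 0 < T)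
    (hr : 0 ≤ r) (hF : Continuous F) (hFb : ∀ y, b ≤ F y) (hFM : ∀ y, F y ≤ M)
    (x Y : ℝ → ℝ) (g : ℝ → ℝ)
    (hx0 : x 0 = x₀)
    (hx : ∀ t ∈ Set.Icc (0 : ℝ) T, HasDerivAt x (F (x t)) t)
    (hg : IntervalIntegrable g volume 0 T)
    (hY : ∀ t ∈ Set.Icc (0 : ℝ) T, Y t = x₀ + ∫ s in (0 : ℝ)..t, g s)
    (hgbd : ∀ᵐ s ∂volume, s ∈ Set.Icc (0 : ℝ) T →
      F (Y s) - r ≤ g s ∧ g s ≤ F (Y s) + r) :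
    ∀ t ∈ Set.Icc (0 : ℝ) T, |Y t - x t| ≤ M * T * r / b :=
  perturbed_ode_comparison_general F b M T r x₀ hb hr hF hFb hFM x Y g hx0 hx hg hY hgbd
end

section
/- Let 0 < κ < 1/2, a > 0, let h be continuous with 0 < b ≤ h(x) ≤ B, and let x : [0,T] → ℝ solve x' = a|x − θ₀|^κ + h(x), x(0) = x₀, with x₀ < θ₀ < x(T). Then, with H = κ + 1/2, as ε → 0, a² ε^{−2} ∫₀^T (|x_t − θ₀ − ε^{1/H} u|^κ − |x_t − θ₀|^κ)² dt → (a²/h(θ₀)) |u|^{2κ+1} ∫_ℝ (|s−1|^κ − |s|^κ)² ds. -/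
open MeasureTheory Filter Set


lemma rpow_sub_rpow_le_aux {κ m x y : ℝ} (h0 : 0 < κ) (h1 : κ ≤ 1) (hm : 0 < m)
    (hx : m ≤ x) (hy : m ≤ y) (hxy : x ≤ y) :
    y ^ κ - x ^ κ ≤ κ * m ^ (κ - 1) * (y - x) := by
  rcases eq_or_lt_of_le hxy with rfl | hlt
  · simp
  have hcont : ContinuousOn (fun t : ℝ => t ^ κ) (Icc x y) := by
    intro t ht
    have : (0:ℝ) < t := lt_of_lt_of_le hm (hx.trans ht.1)
    exact (Real.continuousAt_rpow_const t κ (Or.inl this.ne')).continuousWithinAt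
  have hderiv : ∀ t ∈ Ioo x y, HasDerivAt (fun t : ℝ => t ^ κ) (κ * t ^ (κ - 1)) t := by
    intro t ht
    have htpos : (0:ℝ) < t := lt_of_lt_of_le hm (hx.trans ht.1.le)
    simpa [mul_comm] using Real.hasDerivAt_rpow_const (x := t) (p := κ) (Or.inl htpos.ne')
  obtain ⟨c, hc, hceq⟩ := exists_hasDerivAt_eq_slope (fun t : ℝ => t ^ κ)
    (fun t => κ * t ^ (κ - 1)) hlt hcont hderiv
  have hcm : m ≤ c := hx.trans hc.1.le
  have hcpos : (0:ℝ) < c := lt_of_lt_of_le hm hcm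
  have heq : y ^ κ - x ^ κ = κ * c ^ (κ - 1) * (y - x) := by
    rw [hceq, div_mul_cancel₀ _ (sub_ne_zero.mpr hlt.ne')]
  rw [heq]
  have hle : c ^ (κ - 1) ≤ m ^ (κ - 1) :=
    Real.rpow_le_rpow_of_nonpos hm hcm (by linarith)
  have h2 : 0 ≤ y - x := sub_nonneg.mpr hxy
  have := mul_le_mul_of_nonneg_right (mul_le_mul_of_nonneg_left hle h0.le) h2
  linarith

lemma abs_rpow_sub_rpow_le {κ m x y : ℝ} (h0 : 0 < κ) (h1 : κ ≤ 1) (hm : 0 < m)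
    (hx : m ≤ x) (hy : m ≤ y) : |x ^ κ - y ^ κ| ≤ κ * m ^ (κ - 1) * |x - y| := by
  rcases le_total x y with hxy | hxy
  · rw [abs_sub_comm, abs_of_nonneg (sub_nonneg.mpr (Real.rpow_le_rpow (by linarith) hxy h0.le)),
      abs_sub_comm, abs_of_nonneg (sub_nonneg.mpr hxy)]
    exact rpow_sub_rpow_le_aux h0 h1 hm hx hy hxy
  · rw [abs_of_nonneg (sub_nonneg.mpr (Real.rpow_le_rpow (by linarith) hxy h0.le)),
      abs_of_nonneg (sub_nonneg.mpr hxy)]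
    exact rpow_sub_rpow_le_aux h0 h1 hm hy hx hxy

lemma continuous_G {κ : ℝ} (h0 : 0 < κ) (u : ℝ) :
    Continuous (fun v : ℝ => (|v - u| ^ κ - |v| ^ κ) ^ 2) := by
  apply Continuous.pow
  exact ((continuous_abs.comp (continuous_id.sub continuous_const)).rpow_const
      (fun _ => Or.inr h0.le)).sub (continuous_abs.rpow_const (fun _ => Or.inr h0.le))

lemma G_tail_bound {κ u v : ℝ} (h0 : 0 < κ) (h1 : κ ≤ 1) (hv : 2 * |u| + 2 ≤ |v|) :
    (|v - u| ^ κ - |v| ^ κ) ^ 2 ≤ (κ * |u|) ^ 2 * 2 ^ (2 - 2*κ) * |v| ^ (2*κ - 2) := by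
  have hv2 : (2:ℝ) ≤ |v| := by have := abs_nonneg u; linarith
  have hm : (0:ℝ) < |v| / 2 := by linarith
  have hu2 : |u| ≤ |v| / 2 := by linarith
  have hx : |v| / 2 ≤ |v - u| := by
    have := abs_sub_abs_le_abs_sub v u
    have h2 := le_abs_self (|v| - |u|)
    linarith
  have hy : |v| / 2 ≤ |v| := by linarith
  have habs := abs_rpow_sub_rpow_le h0 h1 hm hx hy
  have hd : abs (|v - u| - |v|) ≤ |u| := by
    have := abs_abs_sub_abs_le_abs_sub v (v - u)
    have h3 : v - (v - u) = u := by ring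
    rw [h3] at this
    rwa [abs_sub_comm]
  have hbound : abs (|v - u| ^ κ - |v| ^ κ) ≤ κ * (|v|/2) ^ (κ - 1) * |u| := by
    calc abs (|v - u| ^ κ - |v| ^ κ) ≤ κ * (|v|/2) ^ (κ - 1) * abs (|v - u| - |v|) := habs
    _ ≤ κ * (|v|/2) ^ (κ - 1) * |u| := by
        apply mul_le_mul_of_nonneg_left hd
        positivity
  have hsq : (|v - u| ^ κ - |v| ^ κ) ^ 2 ≤ (κ * (|v|/2) ^ (κ - 1) * |u|) ^ 2 := by
    rw [← sq_abs]
    exact pow_le_pow_left₀ (abs_nonneg _) hbound 2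
  refine hsq.trans (le_of_eq ?_)
  have e1 : ((|v|/2) ^ (κ - 1)) ^ 2 = (|v|/2) ^ (2*κ - 2) := by
    rw [← Real.rpow_natCast ((|v|/2) ^ (κ-1)) 2, ← Real.rpow_mul hm.le]
    norm_num; ring_nf
  have e2 : (|v|/2) ^ (2*κ - 2) = |v| ^ (2*κ-2) * 2 ^ (2 - 2*κ) := by
    rw [Real.div_rpow (abs_nonneg v) (by norm_num), div_eq_mul_inv, ← Real.rpow_neg (by norm_num)]
    ring_nf
  rw [mul_pow, mul_pow, e1, e2]
  ring



lemma integrable_G_Ioi {κ u M : ℝ} (h0 : 0 < κ) (h1 : κ < 1/2) (hM : 2 * |u| + 2 ≤ M) :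
    IntegrableOn (fun v : ℝ => (|v - u| ^ κ - |v| ^ κ) ^ 2) (Ioi M) := by
  have hMpos : 0 < M := lt_of_lt_of_le (by positivity) hM
  have hpow : IntegrableOn (fun v : ℝ => (κ * |u|) ^ 2 * 2 ^ (2 - 2*κ) * v ^ (2*κ - 2)) (Ioi M) :=
    (integrableOn_Ioi_rpow_of_lt (by linarith) hMpos).const_mul _
  refine Integrable.mono' hpow ((continuous_G h0 u).aestronglyMeasurable.restrict) ?_
  filter_upwards [ae_restrict_mem measurableSet_Ioi] with v hv
  have hvM : M < v := hv
  have hva : |v| = v := abs_of_pos (hMpos.trans hvM)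
  rw [Real.norm_eq_abs, abs_of_nonneg (sq_nonneg _)]
  have := G_tail_bound (u := u) (v := v) h0 (by linarith) (by rw [hva]; linarith)
  rw [hva] at this
  convert this using 3
  rw [hva]

lemma integrable_G {κ : ℝ} (h0 : 0 < κ) (h1 : κ < 1/2) (u : ℝ) :
    Integrable (fun v : ℝ => (|v - u| ^ κ - |v| ^ κ) ^ 2) := by
  set M := 2 * |u| + 2 with hMdef
  have hMpos : (0:ℝ) < M := by positivity
  rw [← integrableOn_univ]
  have hsplit : (univ : Set ℝ) = Iic (-M) ∪ (Icc (-M) M ∪ Ioi M) := by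
    ext t; simp only [mem_univ, mem_union, mem_Iic, mem_Icc, mem_Ioi, true_iff]
    rcases le_total t (-M) with h | h
    · exact Or.inl h
    rcases le_or_gt t M with h2 | h2
    · exact Or.inr (Or.inl ⟨h, h2⟩)
    · exact Or.inr (Or.inr h2)
  rw [hsplit, integrableOn_union, integrableOn_union]
  refine ⟨?_, (continuous_G h0 u).integrableOn_Icc, integrable_G_Ioi h0 h1 le_rfl⟩
  rw [← (Measure.measurePreserving_neg (volume : Measure ℝ)).integrableOn_comp_preimage
      (Homeomorph.neg ℝ).measurableEmbedding]
  have hpre : (Neg.neg ⁻¹' Iic (-M) : Set ℝ) = Ici M := by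
    ext t; simp [neg_le]
  rw [hpre]
  have hcomp : ((fun v : ℝ => (|v - u| ^ κ - |v| ^ κ) ^ 2) ∘ Neg.neg)
      = fun v : ℝ => (|v - (-u)| ^ κ - |v| ^ κ) ^ 2 := by
    funext v
    simp only [Function.comp_apply]
    rw [show -v - u = -(v + u) by ring, abs_neg, abs_neg, show v - -u = v + u by ring]
  rw [hcomp, integrableOn_Ici_iff_integrableOn_Ioi]
  exact integrable_G_Ioi h0 h1 (by rw [abs_neg])

lemma scaling_identity {κ : ℝ} (h0 : 0 < κ) (u : ℝ) :
    ∫ v : ℝ, (|v - u| ^ κ - |v| ^ κ) ^ 2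
      = |u| ^ (2*κ + 1) * ∫ s : ℝ, (|s - 1| ^ κ - |s| ^ κ) ^ 2 := by
  rcases eq_or_ne u 0 with rfl | hu
  · rw [abs_zero, Real.zero_rpow (by positivity), zero_mul]
    simp
  have hu0 : (0:ℝ) < |u| := abs_pos.mpr hu
  have key := MeasureTheory.Measure.integral_comp_mul_left
    (fun v : ℝ => (|v - u| ^ κ - |v| ^ κ) ^ 2) u
  have hptw : ∀ s : ℝ, (|u * s - u| ^ κ - |u * s| ^ κ) ^ 2
      = |u| ^ (2*κ) * ((|s - 1| ^ κ - |s| ^ κ) ^ 2) := by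
    intro s
    have e1 : |u * s - u| = |u| * |s - 1| := by rw [← abs_mul]; ring_nf
    have e2 : |u * s| = |u| * |s| := abs_mul u s
    rw [e1, e2, Real.mul_rpow hu0.le (abs_nonneg _), Real.mul_rpow hu0.le (abs_nonneg _),
      ← mul_sub, mul_pow, ← Real.rpow_natCast (|u| ^ κ) 2, ← Real.rpow_mul hu0.le]
    norm_num [mul_comm]
  simp only [hptw] at key
  rw [integral_const_mul] at key
  rw [smul_eq_mul, abs_inv] at key
  have h2 : ∫ v : ℝ, (|v - u| ^ κ - |v| ^ κ) ^ 2
      = |u| * (|u| ^ (2*κ) * ∫ s : ℝ, (|s - 1| ^ κ - |s| ^ κ) ^ 2) := by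
    rw [key]; field_simp
  rw [h2, Real.rpow_add hu0, Real.rpow_one]; ring

lemma step1 {κ a b θ₀ T u δ : ℝ} (h0 : 0 < κ) (ha : 0 < a) (hb : 0 < b) (hT : 0 < T)
    (hδ : 0 < δ) (h : ℝ → ℝ) (hc : Continuous h) (hhl : ∀ y, b ≤ h y)
    (x : ℝ → ℝ)
    (hx : ∀ t ∈ Icc (0:ℝ) T, HasDerivAt x (a * |x t - θ₀| ^ κ + h (x t)) t) :
    ∫ t in (0:ℝ)..T, (|x t - θ₀ - δ * u| ^ κ - |x t - θ₀| ^ κ) ^ 2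
      = δ ^ (2*κ + 1) * ∫ v in ((x 0 - θ₀)/δ)..((x T - θ₀)/δ),
          (|v - u| ^ κ - |v| ^ κ) ^ 2 / (a * |θ₀ + δ * v - θ₀| ^ κ + h (θ₀ + δ * v)) := by
  set S : ℝ → ℝ := fun y => a * |y - θ₀| ^ κ + h y with hSdef
  have hSb : ∀ y, b ≤ S y := by
    intro y
    have : 0 ≤ a * |y - θ₀| ^ κ := by positivity
    have := hhl y
    simp only [hSdef]
    linarith
  have hSpos : ∀ y, 0 < S y := fun y => lt_of_lt_of_le hb (hSb y)
  have hScont : Continuous S := by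
    apply Continuous.add _ hc
    exact continuous_const.mul ((continuous_abs.comp (continuous_id.sub continuous_const)).rpow_const
      (fun _ => Or.inr h0.le))
  set F : ℝ → ℝ := fun y => (|y - θ₀ - δ * u| ^ κ - |y - θ₀| ^ κ) ^ 2 with hFdef
  have hFcont : Continuous F := by
    apply Continuous.pow
    apply Continuous.sub
    · exact (continuous_abs.comp ((continuous_id.sub continuous_const).sub
        continuous_const)).rpow_const (fun _ => Or.inr h0.le)
    · exact (continuous_abs.comp (continuous_id.sub continuous_const)).rpow_const
        (fun _ => Or.inr h0.le)
  set g : ℝ → ℝ := fun y => F y / S y with hgdef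
  have hgcont : Continuous g := hFcont.div hScont (fun y => (hSpos y).ne')
  have huIcc : uIcc (0:ℝ) T = Icc (0:ℝ) T := uIcc_of_le hT.le
  -- step (a): time → space
  have hstepA : ∫ t in (0:ℝ)..T, F (x t) = ∫ y in (x 0)..(x T), g y := by
    have hxderiv : ∀ t ∈ uIcc (0:ℝ) T, HasDerivAt x (S (x t)) t := by
      rw [huIcc]; exact hx
    have hxcont : ContinuousOn x (uIcc (0:ℝ) T) :=
      fun t ht => (hxderiv t ht).continuousAt.continuousWithinAt
    have hScontOn : ContinuousOn (fun t => S (x t)) (uIcc (0:ℝ) T) :=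
      hScont.comp_continuousOn hxcont
    have key := intervalIntegral.integral_comp_smul_deriv hxderiv hScontOn hgcont
    rw [← key]
    apply intervalIntegral.integral_congr
    intro t _
    simp only [Function.comp_apply, smul_eq_mul, hgdef]
    rw [mul_div_cancel₀ _ (hSpos (x t)).ne']
  -- step (b): linear substitution y = δ v + θ₀
  have hstepB : ∫ y in (x 0)..(x T), g y
      = δ * ∫ v in ((x 0 - θ₀)/δ)..((x T - θ₀)/δ), g (δ * v + θ₀) := by
    have key := intervalIntegral.integral_comp_mul_add (a := (x 0 - θ₀)/δ)
      (b := (x T - θ₀)/δ) (f := g) hδ.ne' θ₀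
    have e1 : δ * ((x 0 - θ₀)/δ) + θ₀ = x 0 := by field_simp; ring
    have e2 : δ * ((x T - θ₀)/δ) + θ₀ = x T := by field_simp; ring
    rw [e1, e2, smul_eq_mul] at key
    rw [key, ← mul_assoc, mul_inv_cancel₀ hδ.ne', one_mul]
  -- step (c): pointwise simplification of g (δ v + θ₀)
  have hstepC : ∀ v : ℝ, g (δ * v + θ₀)
      = δ ^ (2*κ) * ((|v - u| ^ κ - |v| ^ κ) ^ 2 / S (θ₀ + δ * v)) := by
    intro v
    have e1 : |θ₀ + δ * v - θ₀ - δ * u| = δ * |v - u| := by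
      rw [show θ₀ + δ * v - θ₀ - δ * u = δ * (v - u) by ring, abs_mul, abs_of_pos hδ]
    have e2 : |θ₀ + δ * v - θ₀| = δ * |v| := by
      rw [show θ₀ + δ * v - θ₀ = δ * v by ring, abs_mul, abs_of_pos hδ]
    have e3 : δ * v + θ₀ = θ₀ + δ * v := by ring
    simp only [hgdef, hFdef, e3]
    rw [e1, e2, Real.mul_rpow hδ.le (abs_nonneg _), Real.mul_rpow hδ.le (abs_nonneg _), ← mul_sub,
      mul_pow, ← Real.rpow_natCast (δ ^ κ) 2, ← Real.rpow_mul hδ.le]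
    norm_num [mul_comm κ 2, mul_div_assoc]
  rw [hstepA, hstepB]
  simp only [hstepC]
  rw [intervalIntegral.integral_const_mul, ← mul_assoc, Real.rpow_add hδ, Real.rpow_one,
    mul_comm δ]

theorem normalized_quadratic_variation_limit
    (κ a b B θ₀ x₀ T u : ℝ) (h0 : 0 < κ) (h1 : κ < 1/2) (ha : 0 < a)
    (hb : 0 < b) (hT : 0 < T)
    (h : ℝ → ℝ) (hc : Continuous h) (hhl : ∀ y, b ≤ h y) (hhu : ∀ y, h y ≤ B)
    (x : ℝ → ℝ) (hx0 : x 0 = x₀)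
    (hx : ∀ t ∈ Set.Icc (0 : ℝ) T, HasDerivAt x (a * |x t - θ₀| ^ κ + h (x t)) t)
    (hmid : x₀ < θ₀ ∧ θ₀ < x T) :
    Tendsto
      (fun ε : ℝ => a ^ 2 * ε ^ (-(2 : ℝ)) *
        ∫ t in (0 : ℝ)..T,
          (|x t - θ₀ - ε ^ (1 / (κ + 1/2)) * u| ^ κ - |x t - θ₀| ^ κ) ^ 2)
      (nhdsWithin 0 (Set.Ioi 0))
      (nhds (a ^ 2 / h θ₀ * |u| ^ (2 * κ + 1) *
        ∫ s : ℝ, (|s - 1| ^ κ - |s| ^ κ) ^ 2)) := by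
  obtain ⟨hx₀, hxT⟩ := hmid
  have hκ1 : κ + 1/2 ≠ 0 := by positivity
  have hcpos : 0 < 1 / (κ + 1/2) := by positivity
  set c : ℝ := 1 / (κ + 1/2) with hcdef
  set S : ℝ → ℝ := fun y => a * |y - θ₀| ^ κ + h y with hSdef
  have hSb : ∀ y, b ≤ S y := by
    intro y
    have h2 : 0 ≤ a * |y - θ₀| ^ κ := by positivity
    have := hhl y
    simp only [hSdef]; linarith
  have hSpos : ∀ y, 0 < S y := fun y => lt_of_lt_of_le hb (hSb y)
  have hScont : Continuous S := by
    exact (continuous_const.mul ((continuous_abs.comp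
      (continuous_id.sub continuous_const)).rpow_const (fun _ => Or.inr h0.le))).add hc
  have hhθpos : 0 < h θ₀ := lt_of_lt_of_le hb (hhl θ₀)
  have hSθ : S θ₀ = h θ₀ := by
    simp [hSdef, Real.zero_rpow h0.ne']
  set G : ℝ → ℝ := fun v => (|v - u| ^ κ - |v| ^ κ) ^ 2 with hGdef
  have hGnonneg : ∀ v, 0 ≤ G v := fun v => sq_nonneg _
  have hGcont : Continuous G := continuous_G h0 u
  set A : ℝ → ℝ := fun ε => (x₀ - θ₀) / ε ^ c with hAdef
  set Bf : ℝ → ℝ := fun ε => (x T - θ₀) / ε ^ c with hBdef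
  set Φ : ℝ → ℝ → ℝ := fun ε v =>
    indicator (Ioc (A ε) (Bf ε)) (fun w => a ^ 2 * G w / S (θ₀ + ε ^ c * w)) v with hΦdef
  -- convergence of δ = ε ^ c
  have hδ0 : Tendsto (fun ε : ℝ => ε ^ c) (nhdsWithin 0 (Set.Ioi 0)) (nhds 0) := by
    have h2 := (Real.continuousAt_rpow_const 0 c (Or.inr hcpos.le)).tendsto
    rw [Real.zero_rpow hcpos.ne'] at h2
    exact h2.mono_left nhdsWithin_le_nhds
  have hδpos : ∀ᶠ ε in nhdsWithin (0:ℝ) (Set.Ioi 0), 0 < ε ^ c := by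
    filter_upwards [self_mem_nhdsWithin] with ε hε
    exact Real.rpow_pos_of_pos hε c
  have hδ' : Tendsto (fun ε : ℝ => ε ^ c) (nhdsWithin 0 (Set.Ioi 0))
      (nhdsWithin 0 (Set.Ioi 0)) :=
    tendsto_nhdsWithin_iff.mpr ⟨hδ0, hδpos⟩
  have hinv : Tendsto (fun ε : ℝ => (ε ^ c)⁻¹) (nhdsWithin 0 (Set.Ioi 0)) atTop :=
    tendsto_inv_nhdsGT_zero.comp hδ'
  have hBtop : Tendsto Bf (nhdsWithin 0 (Set.Ioi 0)) atTop := by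
    have h2 : Bf = fun ε => (x T - θ₀) * (ε ^ c)⁻¹ := by
      funext ε; simp [hBdef, div_eq_mul_inv]
    rw [h2]
    exact hinv.const_mul_atTop (by linarith)
  have hAbot : Tendsto A (nhdsWithin 0 (Set.Ioi 0)) atBot := by
    have h2 : A = fun ε => -((θ₀ - x₀) * (ε ^ c)⁻¹) := by
      funext ε; simp only [hAdef]; ring
    rw [h2]
    exact tendsto_neg_atTop_atBot.comp (hinv.const_mul_atTop (by linarith))
  -- DCT
  have hmain : Tendsto (fun ε => ∫ v : ℝ, Φ ε v) (nhdsWithin 0 (Set.Ioi 0))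
      (nhds (∫ v : ℝ, a ^ 2 * G v / h θ₀)) := by
    apply tendsto_integral_filter_of_dominated_convergence (fun v => a ^ 2 / b * G v)
    · apply Eventually.of_forall
      intro ε
      apply AEStronglyMeasurable.indicator _ measurableSet_Ioc
      apply Continuous.aestronglyMeasurable
      exact ((continuous_const.mul hGcont).div
        (hScont.comp (continuous_const.add (continuous_const.mul continuous_id)))
        (fun v => (hSpos _).ne'))
    · apply Eventually.of_forall
      intro ε
      apply Eventually.of_forall
      intro v
      rw [Real.norm_eq_abs]
      simp only [hΦdef]
      by_cases hmem : v ∈ Ioc (A ε) (Bf ε)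
      · rw [indicator_of_mem hmem]
        have hval : 0 ≤ a ^ 2 * G v / S (θ₀ + ε ^ c * v) := by
          apply div_nonneg _ (hSpos _).le
          have := hGnonneg v; positivity
        rw [abs_of_nonneg hval]
        calc a ^ 2 * G v / S (θ₀ + ε ^ c * v) ≤ a ^ 2 * G v / b := by
              apply div_le_div_of_nonneg_left _ hb (hSb _)
              have := hGnonneg v; positivity
        _ = a ^ 2 / b * G v := by rw [mul_div_right_comm]
      · rw [indicator_of_notMem hmem, abs_zero]
        have := hGnonneg v; positivity
    · exact (integrable_G h0 h1 u).const_mul _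
    · apply Eventually.of_forall
      intro v
      have hmemev : ∀ᶠ ε in nhdsWithin (0:ℝ) (Set.Ioi 0), v ∈ Ioc (A ε) (Bf ε) := by
        filter_upwards [hAbot.eventually (eventually_lt_atBot v),
          hBtop.eventually (eventually_ge_atTop v)] with ε h₁ h₂
        exact ⟨h₁, h₂⟩
      have htheta : Tendsto (fun ε : ℝ => θ₀ + ε ^ c * v) (nhdsWithin 0 (Set.Ioi 0))
          (nhds θ₀) := by
        have h2 : Tendsto (fun ε : ℝ => ε ^ c * v) (nhdsWithin 0 (Set.Ioi 0)) (nhds 0) := by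
          simpa using hδ0.mul_const v
        simpa using h2.const_add θ₀
      have hStend : Tendsto (fun ε : ℝ => S (θ₀ + ε ^ c * v)) (nhdsWithin 0 (Set.Ioi 0))
          (nhds (h θ₀)) := by
        have h2 := (hScont.tendsto θ₀).comp htheta
        rwa [hSθ] at h2
      have hinner : Tendsto (fun ε : ℝ => a ^ 2 * G v / S (θ₀ + ε ^ c * v))
          (nhdsWithin 0 (Set.Ioi 0)) (nhds (a ^ 2 * G v / h θ₀)) :=
        tendsto_const_nhds.div hStend hhθpos.ne'
      apply Tendsto.congr' _ hinner
      filter_upwards [hmemev] with ε hmem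
      simp only [hΦdef]
      rw [indicator_of_mem hmem]
  -- identify the limit
  have hfinal : (∫ v : ℝ, a ^ 2 * G v / h θ₀)
      = a ^ 2 / h θ₀ * |u| ^ (2 * κ + 1) * ∫ s : ℝ, (|s - 1| ^ κ - |s| ^ κ) ^ 2 := by
    have h2 : (fun v : ℝ => a ^ 2 * G v / h θ₀) = fun v => a ^ 2 / h θ₀ * G v := by
      funext v; rw [mul_div_right_comm]
    rw [h2, integral_const_mul, hGdef, scaling_identity h0 u, mul_assoc]
  rw [hfinal] at hmain
  apply Tendsto.congr' _ hmain
  filter_upwards [self_mem_nhdsWithin] with ε (hε : 0 < ε)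
  -- eventual equality
  have hδp : 0 < ε ^ c := Real.rpow_pos_of_pos hε c
  have hs1 := step1 (θ₀ := θ₀) (u := u) (δ := ε ^ c) h0 ha hb hT hδp h hc hhl x hx
  have hAB : A ε < Bf ε := by
    have hA0 : A ε < 0 := div_neg_of_neg_of_pos (by linarith) hδp
    have hB0 : 0 < Bf ε := div_pos (by linarith) hδp
    linarith
  have hexp : (ε ^ c) ^ (2 * κ + 1) = ε ^ (2:ℝ) := by
    rw [← Real.rpow_mul hε.le]
    congr 1
    rw [hcdef]
    field_simp
  rw [hx0] at hs1
  simp only [hΦdef]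
  rw [integral_indicator measurableSet_Ioc, hs1, hexp]
  have hone : ε ^ (-(2:ℝ)) * ε ^ (2:ℝ) = 1 := by
    rw [← Real.rpow_add hε]; norm_num
  have hSfold : (fun v : ℝ => (|v - u| ^ κ - |v| ^ κ) ^ 2
        / (a * |θ₀ + ε ^ c * v - θ₀| ^ κ + h (θ₀ + ε ^ c * v)))
      = fun v : ℝ => G v / S (θ₀ + ε ^ c * v) := rfl
  rw [hSfold]
  rw [intervalIntegral.integral_of_le hAB.le]
  have hlhs : ∫ v in Ioc (A ε) (Bf ε), a ^ 2 * G v / S (θ₀ + ε ^ c * v)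
      = a ^ 2 * ∫ v in Ioc (A ε) (Bf ε), G v / S (θ₀ + ε ^ c * v) := by
    simp_rw [mul_div_assoc]
    rw [integral_const_mul]
  rw [hlhs]
  have : a ^ 2 * ε ^ (-(2:ℝ)) * (ε ^ (2:ℝ) * ∫ v in Ioc (A ε) (Bf ε), G v / S (θ₀ + ε ^ c * v))
      = a ^ 2 * ((ε ^ (-(2:ℝ)) * ε ^ (2:ℝ)) * ∫ v in Ioc (A ε) (Bf ε), G v / S (θ₀ + ε ^ c * v)) := by
    ring
  rw [this, hone, one_mul]
end
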